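/- Let H ≤ Sym(Δ), K ≤ Sym(Ψ), G ≤ Sym(Ω) be nontrivial finite permutation groups. Then the primitive wreath product H ≀_pa G acting on Δ^Ω is permutationally isomorphic to a subgroup of the primitive wreath product H ≀_pa (K ≀_pa G) acting on Δ^{(Ψ^Ω)}; moreover the embedding can be chosen so that, modulo the base groups H^Ω and H^{Ψ^Ω}, it induces the identity on the common top group G. -/

import Mathlib

/-- The coordinate-permuting action of `G` on the base group `Ω → S`. -/
def permAut (G : Type*) [Group G] (Ω : Type*) [MulAction G Ω] (S : Type*) [Group S] :
    G →* MulAut (Ω → S) where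
  toFun g := MulEquiv.arrowCongr (MulAction.toPerm g) (MulEquiv.refl S)
  map_one' := by ext f σ; simp
  map_mul' g h := by ext f σ; simp [mul_smul]

/-- The wreath product `(Ω → S) ⋊ G`. -/
abbrev Wr (S : Type*) [Group S] (G : Type*) [Group G] (Ω : Type*) [MulAction G Ω] :=
  SemidirectProduct (Ω → S) G (permAut G Ω S)

/-- The product action of `S ≀_pa G` on `Λ^Ω`. -/
def paSmul {S G Om L : Type*} [Group S] [Group G] [MulAction G Om] [MulAction S L]
    (w : Wr S G Om) (f : Om → L) : Om → L :=
  fun τ => w.left τ • f (w.right⁻¹ • τ)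

/-- The product action makes `Λ^Ω` into a `S ≀_pa G`-set. -/
instance instPaMulAction {S G Om L : Type*} [Group S] [Group G] [MulAction G Om]
    [MulAction S L] : MulAction (Wr S G Om) (Om → L) where
  smul := paSmul
  one_smul f := by
    funext τ
    show (1 : Wr S G Om).left τ • f ((1 : Wr S G Om).right⁻¹ • τ) = f τ
    simp
  mul_smul a b f := by
    funext τ
    show (a * b).left τ • f ((a * b).right⁻¹ • τ)
      = a.left τ • paSmul b f (a.right⁻¹ • τ)
    simp [paSmul, SemidirectProduct.mul_left, SemidirectProduct.mul_right, permAut,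
      mul_smul, MulAction.toPerm_symm_apply, Pi.mul_apply, mul_inv_rev,
      MulEquiv.arrowCongr]

/-!
Fix two distinct points `p ≠ q` of `Ψ` (they exist because `K` is nontrivial and faithful on `Ψ`)
and send `ω ∈ Ω` to the function `Ω → Ψ` equal to `q` at `ω` and to `p` elsewhere. This embeds `Ω`
into `Ψ^Ω` equivariantly for the top group `G ≤ K ≀ G`. Extending functions on `Ω` along such an
embedding (by `1` for the base group `H^Ω`, by a chosen point of `Δ` for `Δ^Ω`) then embeds
`H ≀ G` into `H ≀ (K ≀ G)` and `Δ^Ω` into `Δ^{(Ψ^Ω)}` compatibly with the product actions.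
-/

open Function

theorem nontrivial_of_faithfulSMul (M α : Type*) [SMul M α] [Nontrivial M] [FaithfulSMul M α] :
    Nontrivial α :=
  (subsingleton_or_nontrivial α).resolve_left fun _ =>
    let ⟨_, _, hne⟩ := exists_pair_ne M
    hne (eq_of_smul_eq_smul fun _ : α => Subsingleton.elim _ _)

theorem extend_smul_extend {M Om L De : Type*} [Monoid M] [MulAction M De] {χ : Om → L}
    (hχ : Injective χ) (f : Om → M) (x : Om → De) (d : De) :
    extend χ (fun ω => f ω • x ω) (fun _ => d)
      = fun l => extend χ f 1 l • extend χ x (fun _ => d) l := by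
  funext l
  by_cases hl : ∃ ω, χ ω = l
  · obtain ⟨ω, rfl⟩ := hl
    simp only [hχ.extend_apply]
  · simp only [extend_apply' _ _ _ hl, Pi.one_apply, one_smul]

theorem extend_comp_inv_smul {G G' Om L γ : Type*} [Group G] [Group G'] [MulAction G Om]
    [MulAction G' L] {φ : G →* G'} {χ : Om → L} (hχ : Injective χ)
    (hχφ : ∀ (g : G) (ω : Om), χ (g • ω) = φ g • χ ω) (u : Om → γ) (c : γ) (g : G) :
    extend χ (fun ω => u (g⁻¹ • ω)) (fun _ => c)
      = fun l => extend χ u (fun _ => c) ((φ g)⁻¹ • l) := by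
  funext l
  by_cases hl : ∃ ω, χ ω = l
  · obtain ⟨ω, rfl⟩ := hl
    rw [hχ.extend_apply, ← map_inv, ← hχφ, hχ.extend_apply]
  · have hl' : ¬∃ ω, χ ω = (φ g)⁻¹ • l := by
      rintro ⟨ω, hω⟩
      exact hl ⟨g • ω, by rw [hχφ, hω, smul_inv_smul]⟩
    rw [extend_apply' _ _ _ hl, extend_apply' _ _ _ hl']

section ExtendAlongEquivariant

variable {G G' Om L : Type*} [Group G] [Group G'] [MulAction G Om] [MulAction G' L]
  {φ : G →* G'} {χ : Om → L} (hχ : Injective χ)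
  (hχφ : ∀ (g : G) (ω : Om), χ (g • ω) = φ g • χ ω)

noncomputable def wrMap (H : Type*) [Group H] : Wr H G Om →* Wr H G' L :=
  SemidirectProduct.map (ExtendByOne.hom H χ) φ fun g => by
    ext f l
    exact congrFun (extend_comp_inv_smul hχ hχφ f 1 g) l

theorem wrMap_injective (H : Type*) [Group H] (hφ : Injective φ) :
    Injective (wrMap hχ hχφ H) := by
  intro a b hab
  refine SemidirectProduct.ext (extend_injective hχ (1 : L → H) ?_) (hφ ?_)
  · exact congrArg SemidirectProduct.left hab
  · exact congrArg SemidirectProduct.right hab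

theorem paSmul_wrMap_extend {H De : Type*} [Group H] [MulAction H De]
    (w : Wr H G Om) (F : Om → De) (d : De) :
    paSmul (wrMap hχ hχφ H w) (extend χ F (fun _ => d)) = extend χ (paSmul w F) (fun _ => d) := by
  show _ = extend χ (fun ω => w.left ω • F (w.right⁻¹ • ω)) _
  rw [extend_smul_extend hχ, extend_comp_inv_smul hχ hχφ]
  rfl

end ExtendAlongEquivariant

section Bump

variable {Om Psi : Type*} [DecidableEq Om] (p q : Psi)

def bump (ω : Om) : Om → Psi :=
  update (fun _ => p) ω q

theorem bump_injective (hpq : p ≠ q) : Injective (bump (Om := Om) p q) := by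
  intro a b hab
  by_contra hne
  exact hpq (by simpa [bump, hne] using (congrFun hab a).symm)

theorem bump_smul {K G : Type*} [Group K] [MulAction K Psi] [Group G] [MulAction G Om]
    (g : G) (ω : Om) :
    bump p q (g • ω) = (SemidirectProduct.inr g : Wr K G Om) • bump p q ω := by
  funext τ
  show _ = (1 : K) • bump p q ω (g⁻¹ • τ)
  simp only [bump, update_apply, one_smul, inv_smul_eq_iff]

end Bump

theorem forget_middle_permIso_general
    (H K G : Type*) [Group H] [Group K] [Group G]
    [Nontrivial H] [Nontrivial K]
    (De Psi Om : Type*)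
    [MulAction H De] [FaithfulSMul H De] [MulAction K Psi] [FaithfulSMul K Psi]
    [MulAction G Om] :
    ∃ ι : Wr H G Om →* Wr H (Wr K G Om) (Om → Psi),
      Function.Injective ι ∧
      -- modulo the base groups, `ι` induces the identity on the top group `G`
      (∀ w : Wr H G Om, (ι w).right.right = w.right) ∧
      ∃ γ : (Om → De) → ((Om → Psi) → De),
        Function.Injective γ ∧
        ∀ (w : Wr H G Om) (F : Om → De),
          γ (paSmul w F) = paSmul (ι w) (γ F) := by
  classical
  have := nontrivial_of_faithfulSMul H De
  have := nontrivial_of_faithfulSMul K Psi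
  obtain ⟨d⟩ : Nonempty De := inferInstance
  obtain ⟨p, q, hpq⟩ := exists_pair_ne Psi
  have hbump := bump_injective (Om := Om) p q hpq
  refine ⟨wrMap hbump (bump_smul (K := K) p q) H,
    wrMap_injective _ _ H SemidirectProduct.inr_injective, fun w => rfl,
    fun F => extend (bump p q) F (fun _ => d), extend_injective hbump _,
    fun w F => (paSmul_wrMap_extend _ _ w F d).symm⟩

/-- Let `H ≤ Sym(Δ)`, `K ≤ Sym(Ψ)`, `G ≤ Sym(Ω)` be nontrivial finite permutation groups.
Then the primitive wreath product `H ≀_pa G` acting on `Δ^Ω` is permutationally isomorphic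
to a subgroup of `H ≀_pa (K ≀_pa G)` acting on `Δ^{(Ψ^Ω)}`, by an embedding which, modulo
the base groups `H^Ω` and `H^{Ψ^Ω}`, induces the identity on the common top group `G`. -/
theorem forget_middle_permIso
    (H K G : Type*) [Group H] [Group K] [Group G]
    [Finite H] [Finite K] [Finite G] [Nontrivial H] [Nontrivial K] [Nontrivial G]
    (De Psi Om : Type*) [Finite De] [Finite Psi] [Finite Om]
    [MulAction H De] [FaithfulSMul H De] [MulAction K Psi] [FaithfulSMul K Psi]
    [MulAction G Om] [FaithfulSMul G Om] :
    ∃ ι : Wr H G Om →* Wr H (Wr K G Om) (Om → Psi),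
      Function.Injective ι ∧
      -- modulo the base groups, `ι` induces the identity on the top group `G`
      (∀ w : Wr H G Om, (ι w).right.right = w.right) ∧
      ∃ γ : (Om → De) → ((Om → Psi) → De),
        Function.Injective γ ∧
        ∀ (w : Wr H G Om) (F : Om → De),
          γ (paSmul w F) = paSmul (ι w) (γ F) :=
  forget_middle_permIso_general H K G De Psi Om
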